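/- arXiv:2412.11117 — 6 statements merged into one kernel-verified Lean document; each statement's English description precedes it below -/
import Mathlib

section
/- For all real numbers β₁ and β₂ with 0 < β₁, β₁ ≠ 1 and β₂ > 1, there exists a constant C > 0 such that for all t ≥ 0 one has ∫₀ᵗ (1 + t − s)^{−β₁} (1 + s)^{−β₂} ds ≤ C (1 + t)^{−min(β₁, β₂)}. -/
open MeasureTheory Set intervalIntegral

/-!
Split `[0, t]` at `t / 2`. On the first half `1 + t - s ≥ (1 + t) / 2`, so the first factor is
`O((1 + t)^{-β₁})`, and the second is integrable on `[0, ∞)` because `β₂ > 1`. On the second half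
`1 + s ≥ (1 + t) / 2`, so the second factor is `O((1 + t)^{-β₂})`, while the first integrates to
`O((1 + t)^{max(0, 1 - β₁)})`; since `β₂ > 1` the product is again `O((1 + t)^{-min(β₁, β₂)})`.
-/

lemma integral_one_add_rpow_neg {β : ℝ} (hβ : β ≠ 1) {T : ℝ} (hT : 0 ≤ T) :
    ∫ s in (0 : ℝ)..T, (1 + s) ^ (-β) = ((1 + T) ^ (1 - β) - 1) / (1 - β) := by
  have hβ' : -β ≠ -1 := fun h => hβ (neg_injective h)
  have h0 : (0 : ℝ) ∉ uIcc 1 (1 + T) := by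
    rw [uIcc_of_le (by linarith)]
    exact notMem_Icc_of_lt one_pos
  rw [integral_comp_add_left (fun x => x ^ (-β)), add_zero, integral_rpow (Or.inr ⟨hβ', h0⟩),
    Real.one_rpow, neg_add_eq_sub]

lemma integral_one_add_rpow_neg_le {β : ℝ} (hβ : β ≠ 1) {T : ℝ} (hT : 0 ≤ T) :
    ∫ s in (0 : ℝ)..T, (1 + s) ^ (-β) ≤ (1 + T) ^ max 0 (1 - β) / |1 - β| := by
  rw [integral_one_add_rpow_neg hβ hT]
  have hpow : 0 ≤ (1 + T) ^ (1 - β) := by positivity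
  rcases hβ.lt_or_gt with hlt | hgt
  · rw [max_eq_right (by linarith), abs_of_pos (by linarith)]
    gcongr
    linarith
  · rw [max_eq_left (by linarith), abs_of_neg (by linarith), Real.rpow_zero, ← neg_div_neg_eq,
      neg_sub]
    exact div_le_div_of_nonneg_right (by linarith) (by linarith)

lemma continuousOn_one_add_rpow_neg {t : ℝ} (β : ℝ) :
    ContinuousOn (fun s : ℝ => (1 + s) ^ (-β)) (Icc 0 t) :=
  ContinuousOn.rpow_const (by fun_prop) fun s hs => Or.inl (by linarith [hs.1])

lemma rpow_neg_le_two_rpow_mul_rpow_neg {x y β : ℝ} (hy : 0 < y) (hyx : y ≤ 2 * x) (hβ : 0 ≤ β) :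
    x ^ (-β) ≤ 2 ^ β * y ^ (-β) :=
  calc x ^ (-β) ≤ (y / 2) ^ (-β) :=
        Real.rpow_le_rpow_of_nonpos (by positivity) (by linarith) (by linarith)
    _ = 2 ^ β * y ^ (-β) := by
        rw [Real.div_rpow hy.le zero_le_two, Real.rpow_neg zero_le_two, div_inv_eq_mul, mul_comm]

lemma rpow_neg_mul_rpow_max_le {x y a b : ℝ} (hy : 1 ≤ y) (hyx : y ≤ x) (hab : 1 ≤ a ∨ 1 ≤ b) :
    x ^ (-b) * y ^ max 0 (1 - a) ≤ x ^ (-min a b) := by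
  have hx : 0 < x := by linarith
  have hexp : -b + max 0 (1 - a) ≤ -min a b := by
    rw [max_def, min_def]
    split_ifs <;> rcases hab with hab | hab <;> linarith
  calc x ^ (-b) * y ^ max 0 (1 - a) ≤ x ^ (-b) * x ^ max 0 (1 - a) := by gcongr
    _ = x ^ (-b + max 0 (1 - a)) := (Real.rpow_add hx _ _).symm
    _ ≤ x ^ (-min a b) := Real.rpow_le_rpow_of_exponent_le (by linarith) hexp

lemma rpow_neg_mul_integral_one_add_rpow_neg_le {a b t : ℝ} (ha : a ≠ 1) (hab : 1 ≤ a ∨ 1 ≤ b)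
    (ht : 0 ≤ t) :
    (1 + t) ^ (-b) * ∫ s in (0 : ℝ)..t / 2, (1 + s) ^ (-a) ≤ (1 + t) ^ (-min a b) / |1 - a| :=
  calc _ ≤ (1 + t) ^ (-b) * ((1 + t / 2) ^ max 0 (1 - a) / |1 - a|) := by
        gcongr
        exact integral_one_add_rpow_neg_le ha (by linarith)
    _ = (1 + t) ^ (-b) * (1 + t / 2) ^ max 0 (1 - a) / |1 - a| := (mul_div_assoc ..).symm
    _ ≤ _ := by
        gcongr
        exact rpow_neg_mul_rpow_max_le (by linarith) (by linarith) hab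

lemma setIntegral_Icc_mul_sub_le {f g : ℝ → ℝ} {t A B : ℝ} (ht : 0 ≤ t)
    (hf : ContinuousOn f (Icc 0 t)) (hg : ContinuousOn g (Icc 0 t))
    (hf₀ : ∀ s ∈ Icc 0 t, 0 ≤ f s) (hg₀ : ∀ s ∈ Icc 0 t, 0 ≤ g s)
    (hfA : ∀ s ∈ Icc (t / 2) t, f s ≤ A) (hgB : ∀ s ∈ Icc (t / 2) t, g s ≤ B) :
    ∫ s in Icc 0 t, f (t - s) * g s ≤
      (A * ∫ s in (0 : ℝ)..t / 2, g s) + B * ∫ s in (0 : ℝ)..t / 2, f s := by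
  have hf' : ContinuousOn (fun s => f (t - s)) (Icc 0 t) :=
    hf.comp (continuousOn_const.sub continuousOn_id) fun s hs =>
      ⟨by linarith [hs.2], by linarith [hs.1]⟩
  have hint : ∀ {φ : ℝ → ℝ}, ContinuousOn φ (Icc 0 t) → ∀ a b, 0 ≤ a → a ≤ b → b ≤ t →
      IntervalIntegrable φ volume a b := fun hφ _ _ ha hab hb =>
    (hφ.mono (Icc_subset_Icc ha hb)).intervalIntegrable_of_Icc hab
  have hmul : ContinuousOn (fun s => f (t - s) * g s) (Icc 0 t) := hf'.mul hg
  rw [integral_Icc_eq_integral_Ioc, ← integral_of_le ht,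
    ← integral_add_adjacent_intervals (hint hmul 0 (t / 2) le_rfl (by linarith) (by linarith))
      (hint hmul (t / 2) t (by linarith) (by linarith) le_rfl)]
  have hfirst : ∫ s in (0 : ℝ)..t / 2, f (t - s) * g s ≤ A * ∫ s in (0 : ℝ)..t / 2, g s := by
    rw [← intervalIntegral.integral_const_mul]
    refine integral_mono_on (by linarith) (hint hmul 0 (t / 2) le_rfl (by linarith) (by linarith))
      ((hint hg 0 (t / 2) le_rfl (by linarith) (by linarith)).const_mul A) fun s hs => ?_
    exact mul_le_mul_of_nonneg_right (hfA _ ⟨by linarith [hs.2], by linarith [hs.1]⟩)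
      (hg₀ s ⟨hs.1, by linarith [hs.2]⟩)
  have hsecond : ∫ s in t / 2..t, f (t - s) * g s ≤ B * ∫ s in (0 : ℝ)..t / 2, f s := by
    have hreflect : ∫ s in t / 2..t, f (t - s) = ∫ s in (0 : ℝ)..t / 2, f s := by
      rw [integral_comp_sub_left f t, sub_self, sub_half]
    rw [← hreflect, ← intervalIntegral.integral_const_mul]
    refine integral_mono_on (by linarith) (hint hmul (t / 2) t (by linarith) (by linarith) le_rfl)
      ((hint hf' (t / 2) t (by linarith) (by linarith) le_rfl).const_mul B) fun s hs => ?_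
    rw [mul_comm B]
    exact mul_le_mul_of_nonneg_left (hgB s hs) (hf₀ _ ⟨by linarith [hs.2], by linarith [hs.1]⟩)
  exact add_le_add hfirst hsecond

/-- For all real `β₁ ≠ 1`, `0 < β₁`, and `β₂ > 1`, there is `C > 0` such that for all `t ≥ 0`,
`∫₀ᵗ (1 + t − s)^{−β₁} (1 + s)^{−β₂} ds ≤ C (1 + t)^{−min(β₁, β₂)}`. -/
theorem decay_convolution_integral (β₁ β₂ : ℝ) (hβ₁ : 0 < β₁) (hβ₁' : β₁ ≠ 1) (hβ₂ : 1 < β₂) :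
    ∃ C : ℝ, 0 < C ∧ ∀ t : ℝ, 0 ≤ t →
      (∫ s in Set.Icc (0 : ℝ) t, (1 + t - s) ^ (-β₁) * (1 + s) ^ (-β₂)) ≤
        C * (1 + t) ^ (-min β₁ β₂) := by
  have hβ₁₀ : 0 < |1 - β₁| := abs_pos.2 (sub_ne_zero.2 hβ₁'.symm)
  have hβ₂₀ : 0 < |1 - β₂| := abs_pos.2 (by linarith)
  refine ⟨2 ^ β₁ / |1 - β₂| + 2 ^ β₂ / |1 - β₁|, by positivity, fun t ht => ?_⟩
  have hhalf : ∀ β : ℝ, 0 ≤ β → ∀ s ∈ Icc (t / 2) t, (1 + s) ^ (-β) ≤ 2 ^ β * (1 + t) ^ (-β) :=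
    fun β hβ s hs =>
      rpow_neg_le_two_rpow_mul_rpow_neg (y := 1 + t) (by linarith) (by linarith [hs.1]) hβ
  have hnonneg : ∀ β : ℝ, ∀ s ∈ Icc 0 t, 0 ≤ (1 + s) ^ (-β) :=
    fun β s hs => Real.rpow_nonneg (by linarith [hs.1]) _
  have hsplit := setIntegral_Icc_mul_sub_le ht (continuousOn_one_add_rpow_neg β₁)
    (continuousOn_one_add_rpow_neg β₂) (hnonneg β₁) (hnonneg β₂) (hhalf β₁ hβ₁.le)
    (hhalf β₂ (by linarith))
  simp only [← add_sub_assoc] at hsplit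
  calc _ ≤ _ := hsplit
    _ = 2 ^ β₁ * ((1 + t) ^ (-β₁) * ∫ s in (0 : ℝ)..t / 2, (1 + s) ^ (-β₂)) +
          2 ^ β₂ * ((1 + t) ^ (-β₂) * ∫ s in (0 : ℝ)..t / 2, (1 + s) ^ (-β₁)) := by ring
    _ ≤ 2 ^ β₁ * ((1 + t) ^ (-min β₂ β₁) / |1 - β₂|) +
          2 ^ β₂ * ((1 + t) ^ (-min β₁ β₂) / |1 - β₁|) := by
        gcongr
        · exact rpow_neg_mul_integral_one_add_rpow_neg_le (by linarith) (Or.inl hβ₂.le) ht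
        · exact rpow_neg_mul_integral_one_add_rpow_neg_le hβ₁' (Or.inr hβ₂.le) ht
    _ = _ := by rw [min_comm]; ring
end

section
/- For every s ∈ ℝ, with a₀ = 1, a₁ = 5s² + 5, a₂ = 7s⁴ + 22s², a₃ = 3s⁶ + 18s⁴ + 10s², a₄ = s⁶ + 5s⁴, the third Routh–Hurwitz determinant A₃ := det [[a₁, a₀, 0], [a₃, a₂, a₁], [0, a₄, a₃]] equals 96s¹² + 932s¹⁰ + 2731s⁸ + 2795s⁶ + 875s⁴; in particular A₃ > 0 whenever s ≠ 0. -/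
theorem Matrix.det_hurwitz_three {R : Type*} [CommRing R] (a₀ a₁ a₂ a₃ a₄ : R) :
    !![a₁, a₀, 0; a₃, a₂, a₁; 0, a₄, a₃].det = a₁ * a₂ * a₃ - a₀ * a₃ ^ 2 - a₁ ^ 2 * a₄ := by
  rw [Matrix.det_fin_three]
  simp only [Matrix.of_apply, Matrix.cons_val', Matrix.cons_val_zero, Matrix.cons_val_one,
    Matrix.cons_val_two, Matrix.empty_val', Matrix.cons_val_fin_one, Matrix.head_cons,
    Matrix.tail_cons, Matrix.head_fin_const]
  ring

/-- With `a₀ = 1`, `a₁ = 5s²+5`, `a₂ = 7s⁴+22s²`, `a₃ = 3s⁶+18s⁴+10s²`, `a₄ = s⁶+5s⁴`, the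
third Routh–Hurwitz determinant `A₃ = det [[a₁, a₀, 0], [a₃, a₂, a₁], [0, a₄, a₃]]` equals
`96s¹² + 932s¹⁰ + 2731s⁸ + 2795s⁶ + 875s⁴`, and is positive whenever `s ≠ 0`. -/
theorem routh_hurwitz_A3 (s : ℝ) :
    Matrix.det !![5 * s ^ 2 + 5, 1, 0;
                  3 * s ^ 6 + 18 * s ^ 4 + 10 * s ^ 2, 7 * s ^ 4 + 22 * s ^ 2, 5 * s ^ 2 + 5;
                  0, s ^ 6 + 5 * s ^ 4, 3 * s ^ 6 + 18 * s ^ 4 + 10 * s ^ 2] =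
        96 * s ^ 12 + 932 * s ^ 10 + 2731 * s ^ 8 + 2795 * s ^ 6 + 875 * s ^ 4 ∧
      (s ≠ 0 →
        0 < Matrix.det !![5 * s ^ 2 + 5, 1, 0;
                  3 * s ^ 6 + 18 * s ^ 4 + 10 * s ^ 2, 7 * s ^ 4 + 22 * s ^ 2, 5 * s ^ 2 + 5;
                  0, s ^ 6 + 5 * s ^ 4, 3 * s ^ 6 + 18 * s ^ 4 + 10 * s ^ 2]) := by
  have hA₃ : Matrix.det !![5 * s ^ 2 + 5, 1, 0;
      3 * s ^ 6 + 18 * s ^ 4 + 10 * s ^ 2, 7 * s ^ 4 + 22 * s ^ 2, 5 * s ^ 2 + 5;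
      0, s ^ 6 + 5 * s ^ 4, 3 * s ^ 6 + 18 * s ^ 4 + 10 * s ^ 2] =
      96 * s ^ 12 + 932 * s ^ 10 + 2731 * s ^ 8 + 2795 * s ^ 6 + 875 * s ^ 4 := by
    rw [Matrix.det_hurwitz_three]
    ring
  refine ⟨hA₃, fun hs => ?_⟩
  rw [hA₃]
  positivity
end

section
/- For every s ∈ ℝ with s ≠ 0, every complex eigenvalue λ of the matrix J(s) (viewed as a complex 4×4 matrix, i.e. every root λ ∈ ℂ of its characteristic polynomial) satisfies Re λ > 0. -/
/-!
Routh–Hurwitz for quartics. Suppose `z = x + iy` with `x ≥ 0` is a root of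
`z⁴ + a₁z³ + a₂z² + a₃z + a₄`. It cannot be real since all coefficients are positive;
otherwise the imaginary part of the equation expresses `y²` through `x`, and substituting it
into the real part leaves a polynomial in `x` whose coefficients are all nonpositive and whose
constant term is minus the Hurwitz determinant `a₁a₂a₃ - a₃² - a₁²a₄ > 0`. The eigenvalues of
`J(s)` are the negatives of the roots of such a quartic, whose Hurwitz determinant is
`s⁴ (875 + 2795 s² + 2731 s⁴ + 932 s⁶ + 96 s⁸)`.
-/

/-- The Fourier symbol of the linearized diffusion-approximation radiation
hydrodynamics system at frequency of modulus `s`. -/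
noncomputable def J (s : ℝ) : Matrix (Fin 4) (Fin 4) ℝ :=
  !![0, s, 0, 0;
     -s, 3 * s ^ 2, -s, -s;
     0, s, s ^ 2 + 4, -1;
     0, 0, -4, s ^ 2 + 1]

theorem quartic_re_im_eq_zero {a₁ a₂ a₃ a₄ : ℝ} {z : ℂ}
    (hz : z ^ 4 + a₁ * z ^ 3 + a₂ * z ^ 2 + a₃ * z + a₄ = 0) :
    z.re ^ 4 - 6 * z.re ^ 2 * z.im ^ 2 + z.im ^ 4 + a₁ * (z.re ^ 3 - 3 * z.re * z.im ^ 2)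
        + a₂ * (z.re ^ 2 - z.im ^ 2) + a₃ * z.re + a₄ = 0 ∧
      z.im * (4 * z.re ^ 3 - 4 * z.re * z.im ^ 2 + a₁ * (3 * z.re ^ 2 - z.im ^ 2)
        + 2 * a₂ * z.re + a₃) = 0 := by
  constructor
  · have h := congrArg Complex.re hz
    simp only [pow_succ, pow_zero, one_mul, Complex.add_re, Complex.mul_re, Complex.mul_im,
      Complex.ofReal_re, Complex.ofReal_im, zero_mul, sub_zero, Complex.zero_re] at h
    linear_combination h
  · have h := congrArg Complex.im hz
    simp only [pow_succ, pow_zero, one_mul, Complex.add_im, Complex.mul_im, Complex.mul_re,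
      Complex.ofReal_re, Complex.ofReal_im, zero_mul, add_zero, Complex.zero_im] at h
    linear_combination h

theorem hurwitz_quartic_resultant_neg {a₁ a₂ a₃ a₄ x : ℝ} (ha₁ : 0 < a₁) (ha₂ : 0 < a₂)
    (ha₃ : 0 < a₃) (hΔ : a₃ ^ 2 + a₁ ^ 2 * a₄ < a₁ * a₂ * a₃) (hx : 0 ≤ x) :
    (4 * x ^ 3 + 3 * a₁ * x ^ 2 + 2 * a₂ * x + a₃) ^ 2
      - (4 * x ^ 3 + 3 * a₁ * x ^ 2 + 2 * a₂ * x + a₃) * (6 * x ^ 2 + 3 * a₁ * x + a₂) * (4 * x + a₁)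
      + (x ^ 4 + a₁ * x ^ 3 + a₂ * x ^ 2 + a₃ * x + a₄) * (4 * x + a₁) ^ 2 < 0 := by
  have h₄ : 4 * a₄ < a₂ ^ 2 := by
    -- `a₁² (a₂² - 4a₄) = (a₁a₂ - 2a₃)² + 4 (a₁a₂a₃ - a₃² - a₁²a₄)`
    have : a₁ ^ 2 * (4 * a₄) < a₁ ^ 2 * a₂ ^ 2 := by nlinarith [sq_nonneg (a₁ * a₂ - 2 * a₃)]
    exact lt_of_mul_lt_mul_left this (sq_nonneg a₁)
  have hc₁ : 0 ≤ 2 * a₁ * (a₂ ^ 2 - 4 * a₄ + a₁ * a₃) := by nlinarith [mul_pos ha₁ ha₃]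
  have hc₂ : 0 ≤ 4 * (a₂ ^ 2 - 4 * a₄ + a₁ * a₃ + 2 * a₁ ^ 2 * a₂) := by
    nlinarith [mul_pos ha₁ ha₃, mul_pos (mul_pos ha₁ ha₁) ha₂]
  have hc₃ : 0 ≤ 8 * a₁ * (4 * a₂ + a₁ ^ 2) := by positivity
  have hc₄ : 0 ≤ 16 * (2 * a₂ + 3 * a₁ ^ 2) := by positivity
  calc _ = -(a₁ * a₂ * a₃ - a₃ ^ 2 - a₁ ^ 2 * a₄) - 2 * a₁ * (a₂ ^ 2 - 4 * a₄ + a₁ * a₃) * x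
        - 4 * (a₂ ^ 2 - 4 * a₄ + a₁ * a₃ + 2 * a₁ ^ 2 * a₂) * x ^ 2
        - 8 * a₁ * (4 * a₂ + a₁ ^ 2) * x ^ 3 - 16 * (2 * a₂ + 3 * a₁ ^ 2) * x ^ 4
        - 96 * a₁ * x ^ 5 - 64 * x ^ 6 := by ring
    _ < 0 := by
      linarith [mul_nonneg hc₁ hx, mul_nonneg hc₂ (pow_nonneg hx 2),
        mul_nonneg hc₃ (pow_nonneg hx 3), mul_nonneg hc₄ (pow_nonneg hx 4),
        mul_nonneg ha₁.le (pow_nonneg hx 5), pow_nonneg hx 6]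

theorem re_neg_of_hurwitz_quartic {a₁ a₂ a₃ a₄ : ℝ} {z : ℂ} (ha₁ : 0 < a₁) (ha₃ : 0 < a₃)
    (ha₄ : 0 < a₄) (hΔ : a₃ ^ 2 + a₁ ^ 2 * a₄ < a₁ * a₂ * a₃)
    (hz : z ^ 4 + a₁ * z ^ 3 + a₂ * z ^ 2 + a₃ * z + a₄ = 0) :
    z.re < 0 := by
  have ha₂ : 0 < a₂ := by
    have : 0 < a₁ * a₃ * a₂ := by nlinarith [sq_nonneg a₃, mul_pos (mul_pos ha₁ ha₁) ha₄]
    exact pos_of_mul_pos_right this (mul_pos ha₁ ha₃).le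
  obtain ⟨hre, him⟩ := quartic_re_im_eq_zero hz
  set x := z.re
  set y := z.im
  by_contra! hx
  rcases mul_eq_zero.mp him with hy | hy
  · rw [hy] at hre
    linarith [pow_nonneg hx 4, mul_nonneg ha₁.le (pow_nonneg hx 3),
      mul_nonneg ha₂.le (pow_nonneg hx 2), mul_nonneg ha₃.le hx]
  · have hres := hurwitz_quartic_resultant_neg (a₄ := a₄) ha₁ ha₂ ha₃ hΔ hx
    -- `hy` says `y² (4x + a₁) = 4x³ + 3a₁x² + 2a₂x + a₃`; eliminate `y²` from `hre`
    have : (4 * x ^ 3 + 3 * a₁ * x ^ 2 + 2 * a₂ * x + a₃) ^ 2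
        - (4 * x ^ 3 + 3 * a₁ * x ^ 2 + 2 * a₂ * x + a₃) * (6 * x ^ 2 + 3 * a₁ * x + a₂)
          * (4 * x + a₁)
        + (x ^ 4 + a₁ * x ^ 3 + a₂ * x ^ 2 + a₃ * x + a₄) * (4 * x + a₁) ^ 2 = 0 := by
      linear_combination (4 * x + a₁) ^ 2 * hre
        + (y ^ 2 * (4 * x + a₁) + (4 * x ^ 3 + 3 * a₁ * x ^ 2 + 2 * a₂ * x + a₃)
          - (6 * x ^ 2 + 3 * a₁ * x + a₂) * (4 * x + a₁)) * hy
    linarith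

theorem eval_charpoly_J_map (s : ℝ) (l : ℂ) :
    ((J s).map (algebraMap ℝ ℂ)).charpoly.eval l =
      l ^ 4 - (5 + 5 * s ^ 2) * l ^ 3 + (22 * s ^ 2 + 7 * s ^ 4) * l ^ 2
        - (10 * s ^ 2 + 18 * s ^ 4 + 3 * s ^ 6) * l + (5 * s ^ 4 + s ^ 6) := by
  rw [Matrix.eval_charpoly, Matrix.det_succ_row_zero]
  simp [Fin.sum_univ_succ, Fin.succAbove, Matrix.det_fin_three, J, Matrix.submatrix]
  ring

/-- For `s ≠ 0`, every complex eigenvalue of `J(s)` (i.e. every complex root of its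
characteristic polynomial) has positive real part. -/
theorem eigenvalues_J_pos_re (s : ℝ) (hs : s ≠ 0) (l : ℂ)
    (hl : ((J s).map (algebraMap ℝ ℂ)).charpoly.IsRoot l) :
    0 < l.re := by
  have hroot : (-l) ^ 4 + ((5 + 5 * s ^ 2 : ℝ) : ℂ) * (-l) ^ 3
      + ((22 * s ^ 2 + 7 * s ^ 4 : ℝ) : ℂ) * (-l) ^ 2
      + ((10 * s ^ 2 + 18 * s ^ 4 + 3 * s ^ 6 : ℝ) : ℂ) * (-l)
      + ((5 * s ^ 4 + s ^ 6 : ℝ) : ℂ) = 0 := by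
    rw [Polynomial.IsRoot.def, eval_charpoly_J_map] at hl
    push_cast
    linear_combination hl
  have hΔ : (10 * s ^ 2 + 18 * s ^ 4 + 3 * s ^ 6) ^ 2 + (5 + 5 * s ^ 2) ^ 2 * (5 * s ^ 4 + s ^ 6)
      < (5 + 5 * s ^ 2) * (22 * s ^ 2 + 7 * s ^ 4) * (10 * s ^ 2 + 18 * s ^ 4 + 3 * s ^ 6) := by
    rw [← sub_pos]
    calc (0 : ℝ) < s ^ 4 * (875 + 2795 * s ^ 2 + 2731 * s ^ 4 + 932 * s ^ 6 + 96 * s ^ 8) := by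
          positivity
      _ = _ := by ring
  have := re_neg_of_hurwitz_quartic (by positivity) (by positivity) (by positivity) hΔ hroot
  simpa using this
end

section
/- For all real numbers r, R with 0 < r < R, there exist constants C > 0 and κ > 0 such that for every s ∈ [r, R] and every t ≥ 0 the matrix exponential satisfies ‖exp(−t · J(s))‖ ≤ C e^{−κ t}, where ‖·‖ is the operator norm on 4×4 real matrices. -/
/-!
Along `ẋ = -J(s) x` the component `x₀` is not damped directly (it is coupled to `x₁` only
through the antisymmetric entries `±s`), so no diagonal weighting of `|x|²` decays strictly.
Adding the cross term `-b s x₀ x₁` to the weighted energy `x₀² + x₁² + 5 x₂² + (5/4) x₃²`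
transfers the damping of `x₁` to `x₀` (hypocoercivity): this energy decays at rate `b s² / 3`, as
an explicit sum of squares shows. For `b = 1 / (9 (1 + R²))` it lies between `|x|² / 2` and
`5 |x|²` for all `s ∈ [r, R]`, whence the bound with `C = √10` and `κ = b r² / 6`.
-/

open scoped Matrix.Norms.L2Operator

open scoped RealInnerProductSpace

open Real in
theorem le_mul_exp_neg_mul_of_hasDerivAt {f f' : ℝ → ℝ} {c : ℝ}
    (hf : ∀ t, HasDerivAt f (f' t) t) (hf' : ∀ t, f' t ≤ -c * f t) {t : ℝ} (ht : 0 ≤ t) :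
    f t ≤ f 0 * exp (-c * t) := by
  have hg : ∀ u, HasDerivAt (fun u ↦ f u * exp (c * u)) ((f' u + c * f u) * exp (c * u)) u :=
    fun u ↦ ((hf u).mul ((hasDerivAt_id' u).const_mul c).exp).congr_deriv (by ring)
  have hanti : Antitone fun u ↦ f u * exp (c * u) :=
    antitone_of_deriv_nonpos (fun u ↦ (hg u).differentiableAt) fun u ↦ by
      rw [(hg u).deriv]
      exact mul_nonpos_of_nonpos_of_nonneg (by linarith [hf' u]) (exp_pos _).le
  calc f t = f t * exp (c * t) * exp (-c * t) := by
        rw [mul_assoc, ← exp_add, neg_mul, add_neg_cancel, exp_zero, mul_one]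
    _ ≤ f 0 * exp (-c * t) := by
        gcongr
        simpa using hanti ht

namespace ContinuousLinearMap

theorem hasDerivAt_exp_smul_apply {𝕜 E : Type*} [RCLike 𝕜] [NormedAddCommGroup E]
    [NormedSpace 𝕜 E] [CompleteSpace E] (A : E →L[𝕜] E) (y : E) (t : 𝕜) :
    HasDerivAt (fun τ : 𝕜 ↦ NormedSpace.exp (τ • A) y) (A (NormedSpace.exp (t • A) y)) t :=
  (hasDerivAt_exp_smul_const' A t).clm_apply (hasDerivAt_const t y) |>.congr_deriv (by simp)

variable {E : Type*} [NormedAddCommGroup E] [InnerProductSpace ℝ E] [CompleteSpace E]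

theorem norm_exp_smul_apply_sq_le_of_lyapunov (A P : E →L[ℝ] E) {m M c : ℝ} (hm : 0 < m)
    (hlow : ∀ x, m * ‖x‖ ^ 2 ≤ ⟪x, P x⟫) (hup : ∀ x, ⟪x, P x⟫ ≤ M * ‖x‖ ^ 2)
    (hdiss : ∀ x, ⟪A x, P x⟫ + ⟪x, P (A x)⟫ ≤ -c * ⟪x, P x⟫) (y : E) {t : ℝ} (ht : 0 ≤ t) :
    ‖NormedSpace.exp (t • A) y‖ ^ 2 ≤ M / m * Real.exp (-c * t) * ‖y‖ ^ 2 := by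
  set x := fun τ : ℝ ↦ NormedSpace.exp (τ • A) y
  have hx : ∀ τ, HasDerivAt x (A (x τ)) τ := hasDerivAt_exp_smul_apply A y
  have henergy : ∀ τ, HasDerivAt (fun τ ↦ ⟪x τ, P (x τ)⟫)
      (⟪A (x τ), P (x τ)⟫ + ⟪x τ, P (A (x τ))⟫) τ := fun τ ↦
    ((hx τ).inner ℝ (P.hasFDerivAt.comp_hasDerivAt τ (hx τ))).congr_deriv (add_comm _ _)
  have hdecay := le_mul_exp_neg_mul_of_hasDerivAt henergy (fun τ ↦ hdiss (x τ)) ht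
  have hx0 : x 0 = y := by simp [x]
  rw [hx0] at hdecay
  rw [div_mul_eq_mul_div, div_mul_eq_mul_div, le_div_iff₀ hm]
  calc ‖x t‖ ^ 2 * m ≤ ⟪x t, P (x t)⟫ := by linarith [hlow (x t)]
    _ ≤ ⟪y, P y⟫ * Real.exp (-c * t) := hdecay
    _ ≤ M * Real.exp (-c * t) * ‖y‖ ^ 2 := by nlinarith [hup y, Real.exp_pos (-c * t)]

theorem norm_exp_smul_le_of_lyapunov (A P : E →L[ℝ] E) {m M c : ℝ} (hm : 0 < m)
    (hlow : ∀ x, m * ‖x‖ ^ 2 ≤ ⟪x, P x⟫) (hup : ∀ x, ⟪x, P x⟫ ≤ M * ‖x‖ ^ 2)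
    (hdiss : ∀ x, ⟪A x, P x⟫ + ⟪x, P (A x)⟫ ≤ -c * ⟪x, P x⟫) {t : ℝ} (ht : 0 ≤ t) :
    ‖NormedSpace.exp (t • A)‖ ≤ √(M / m) * Real.exp (-(c / 2) * t) := by
  refine opNorm_le_bound _ (by positivity) fun y ↦ ?_
  rw [← pow_le_pow_iff_left₀ (norm_nonneg _) (by positivity) two_ne_zero, mul_pow, mul_pow,
    Real.sq_sqrt', ← Real.exp_nat_mul, show ((2 : ℕ) : ℝ) * (-(c / 2) * t) = -c * t by ring]
  calc _ ≤ M / m * Real.exp (-c * t) * ‖y‖ ^ 2 :=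
        norm_exp_smul_apply_sq_le_of_lyapunov A P hm hlow hup hdiss y ht
    _ ≤ _ := by gcongr; exact le_max_left _ _

end ContinuousLinearMap

namespace Matrix

variable {n : Type*} [Fintype n] [DecidableEq n]

theorem continuous_toEuclideanCLM {𝕜 : Type*} [RCLike 𝕜] :
    Continuous (toEuclideanCLM (n := n) (𝕜 := 𝕜)) :=
  (AddMonoidHomClass.isometry_of_norm _ l2_opNorm_toEuclideanCLM).continuous

theorem toEuclideanCLM_exp {𝕜 : Type*} [RCLike 𝕜] (A : Matrix n n 𝕜) :
    toEuclideanCLM (𝕜 := 𝕜) (NormedSpace.exp A) = NormedSpace.exp (toEuclideanCLM (𝕜 := 𝕜) A) :=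
  NormedSpace.map_exp_of_mem_ball (𝕂 := 𝕜) _ continuous_toEuclideanCLM A
    ((NormedSpace.expSeries_radius_eq_top 𝕜 (Matrix n n 𝕜)).symm ▸ edist_lt_top _ _)

theorem l2_opNorm_exp_smul_le_of_lyapunov (A P : Matrix n n ℝ) {m M c : ℝ} (hm : 0 < m)
    (hlow : ∀ x, m * (x ⬝ᵥ x) ≤ x ⬝ᵥ P *ᵥ x) (hup : ∀ x, x ⬝ᵥ P *ᵥ x ≤ M * (x ⬝ᵥ x))
    (hdiss : ∀ x, (A *ᵥ x) ⬝ᵥ P *ᵥ x + x ⬝ᵥ P *ᵥ (A *ᵥ x) ≤ -c * (x ⬝ᵥ P *ᵥ x))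
    {t : ℝ} (ht : 0 ≤ t) :
    ‖NormedSpace.exp (t • A)‖ ≤ √(M / m) * Real.exp (-(c / 2) * t) := by
  have hnorm (x : EuclideanSpace ℝ n) : ‖x‖ ^ 2 = x.ofLp ⬝ᵥ x.ofLp := by
    rw [← real_inner_self_eq_norm_sq, EuclideanSpace.inner_eq_star_dotProduct]
    simp
  rw [← l2_opNorm_toEuclideanCLM, toEuclideanCLM_exp, map_smul]
  refine ContinuousLinearMap.norm_exp_smul_le_of_lyapunov (toEuclideanCLM (𝕜 := ℝ) A)
    (toEuclideanCLM (𝕜 := ℝ) P) hm (fun x ↦ ?_) (fun x ↦ ?_)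
    (fun x ↦ ?_) ht <;>
    simp only [hnorm, inner_toEuclideanCLM, ofLp_toEuclideanCLM]
  exacts [hlow x, hup x, hdiss x]

end Matrix

open scoped Matrix

noncomputable def hypocoercivityMatrix (b s : ℝ) : Matrix (Fin 4) (Fin 4) ℝ :=
  !![1, -(b * s / 2), 0, 0;
     -(b * s / 2), 1, 0, 0;
     0, 0, 5, 0;
     0, 0, 0, 5 / 4]

theorem dotProduct_hypocoercivityMatrix_mulVec (b s : ℝ) (x y : Fin 4 → ℝ) :
    x ⬝ᵥ hypocoercivityMatrix b s *ᵥ y =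
      x 0 * y 0 + x 1 * y 1 - b * s / 2 * (x 0 * y 1 + x 1 * y 0) + 5 * (x 2 * y 2)
        + 5 / 4 * (x 3 * y 3) := by
  simp only [dotProduct, Matrix.mulVec, hypocoercivityMatrix, Matrix.of_apply, Matrix.cons_val',
    Matrix.cons_val_fin_one, Fin.sum_univ_four, Matrix.cons_val_zero, Matrix.cons_val_one,
    Matrix.cons_val]
  ring

theorem neg_J_mulVec (s : ℝ) (x : Fin 4 → ℝ) :
    -J s *ᵥ x = ![-(s * x 1), s * x 0 - 3 * s ^ 2 * x 1 + s * x 2 + s * x 3,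
      -(s * x 1) - (s ^ 2 + 4) * x 2 + x 3, 4 * x 2 - (s ^ 2 + 1) * x 3] := by
  ext i
  fin_cases i <;> simp [J, Matrix.mulVec, dotProduct, Fin.sum_univ_four] <;> ring

theorem half_dotProduct_self_le_hypocoercivityMatrix {b s : ℝ} (hbs : |b * s| ≤ 1)
    (x : Fin 4 → ℝ) : 1 / 2 * (x ⬝ᵥ x) ≤ x ⬝ᵥ hypocoercivityMatrix b s *ᵥ x := by
  rw [dotProduct_hypocoercivityMatrix_mulVec]
  simp only [dotProduct, Fin.sum_univ_four]
  obtain ⟨h1, h2⟩ := abs_le.mp hbs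
  nlinarith [mul_nonneg (sub_nonneg.2 h2) (sq_nonneg (x 0 - x 1)),
    mul_nonneg (neg_le_iff_add_nonneg.mp h1) (sq_nonneg (x 0 + x 1)),
    sq_nonneg (x 2), sq_nonneg (x 3)]

theorem hypocoercivityMatrix_le_five_dotProduct_self {b s : ℝ} (hbs : |b * s| ≤ 1)
    (x : Fin 4 → ℝ) : x ⬝ᵥ hypocoercivityMatrix b s *ᵥ x ≤ 5 * (x ⬝ᵥ x) := by
  rw [dotProduct_hypocoercivityMatrix_mulVec]
  simp only [dotProduct, Fin.sum_univ_four]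
  obtain ⟨h1, h2⟩ := abs_le.mp hbs
  nlinarith [mul_nonneg (sub_nonneg.2 h2) (sq_nonneg (x 0 + x 1)),
    mul_nonneg (neg_le_iff_add_nonneg.mp h1) (sq_nonneg (x 0 - x 1)),
    sq_nonneg (x 2), sq_nonneg (x 3)]

theorem neg_J_dissipation_le {b s : ℝ} (hs : 0 ≤ s) (hb : 0 ≤ b) (hb9 : 9 * b ≤ 1)
    (hbs : 9 * b * s ^ 2 ≤ 1) (x : Fin 4 → ℝ) :
    (-J s *ᵥ x) ⬝ᵥ hypocoercivityMatrix b s *ᵥ x + x ⬝ᵥ hypocoercivityMatrix b s *ᵥ (-J s *ᵥ x)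
      ≤ -(b * s ^ 2 / 3) * (x ⬝ᵥ hypocoercivityMatrix b s *ᵥ x) := by
  have hbs1 : b * s ≤ 1 := by nlinarith
  have c₁ : 0 ≤ b * s ^ 2 * (5 / 12 - b * s / 6) := mul_nonneg (by positivity) (by linarith)
  have c₂ : 0 ≤ s ^ 2 * (4 - 4 * b / 3 - 18 * b * s ^ 2 - b * (b * s) / 6) :=
    mul_nonneg (by positivity) (by nlinarith)
  have c₃ : 0 ≤ s ^ 2 * (2 - 7 * b / 3) := mul_nonneg (by positivity) (by linarith)
  have c₄ : 0 ≤ (s ^ 2 + 4) / 2 - b * s ^ 2 / 12 := by nlinarith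
  simp only [dotProduct_hypocoercivityMatrix_mulVec, neg_J_mulVec, Matrix.cons_val_zero,
    Matrix.cons_val_one, Matrix.cons_val]
  -- `5 x₂² + (5/4) x₃² = (x₂ + x₃)² + (4 x₂ - x₃)² / 4` explains the last two squares.
  linear_combination (b * s ^ 2 / 8) * sq_nonneg (x 0 - 12 * s * x 1)
    + (b * s ^ 2 / 8) * sq_nonneg (x 0 + 4 * (x 2 + x 3))
    + (1 / 2) * sq_nonneg (2 * s * x 1 + 4 * x 2 - x 3)
    + (b ^ 2 * s ^ 3 / 6) * sq_nonneg (x 0 + x 1)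
    + mul_nonneg c₁ (sq_nonneg (x 0)) + mul_nonneg c₂ (sq_nonneg (x 1))
    + mul_nonneg c₃ (sq_nonneg (x 2 + x 3)) + mul_nonneg c₄ (sq_nonneg (4 * x 2 - x 3))

theorem neg_J_dissipation_le_of_le {b r s : ℝ} (hr : 0 ≤ r) (hrs : r ≤ s) (hb : 0 ≤ b)
    (hb9 : 9 * b ≤ 1) (hbs : 9 * b * s ^ 2 ≤ 1) (x : Fin 4 → ℝ) :
    (-J s *ᵥ x) ⬝ᵥ hypocoercivityMatrix b s *ᵥ x + x ⬝ᵥ hypocoercivityMatrix b s *ᵥ (-J s *ᵥ x)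
      ≤ -(b * r ^ 2 / 3) * (x ⬝ᵥ hypocoercivityMatrix b s *ᵥ x) := by
  have hbs1 : |b * s| ≤ 1 := abs_le.mpr ⟨by nlinarith, by nlinarith⟩
  have hQ : 0 ≤ x ⬝ᵥ hypocoercivityMatrix b s *ᵥ x :=
    (mul_nonneg one_half_pos.le (by simpa using dotProduct_self_star_nonneg x)).trans
      (half_dotProduct_self_le_hypocoercivityMatrix hbs1 x)
  have hrs2 : r ^ 2 ≤ s ^ 2 := pow_le_pow_left₀ hr hrs 2
  nlinarith [neg_J_dissipation_le (hr.trans hrs) hb hb9 hbs x,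
    mul_nonneg (mul_nonneg hb (sub_nonneg.2 hrs2)) hQ]

theorem medium_frequency_matrix_exp_decay_general (r R : ℝ) (hr : 0 < r) :
    ∃ C κ : ℝ, 0 < C ∧ 0 < κ ∧ ∀ s ∈ Set.Icc r R, ∀ t : ℝ, 0 ≤ t →
      ‖NormedSpace.exp (-(t • J s))‖ ≤ C * Real.exp (-κ * t) := by
  set b : ℝ := (9 * (1 + R ^ 2))⁻¹
  have hb : 0 < b := by positivity
  have hbR : 9 * (1 + R ^ 2) * b = 1 := mul_inv_cancel₀ (by positivity)
  refine ⟨√10, b * r ^ 2 / 6, by positivity, by positivity, ?_⟩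
  rintro s ⟨hrs, hsR⟩ t ht
  have hs : 0 < s := hr.trans_le hrs
  have hbs2 : 9 * b * s ^ 2 ≤ 1 := by nlinarith [pow_le_pow_left₀ hs.le hsR 2]
  have hbs : |b * s| ≤ 1 := abs_le.mpr ⟨by nlinarith, by nlinarith⟩
  have hdecay := Matrix.l2_opNorm_exp_smul_le_of_lyapunov _ _ one_half_pos
    (half_dotProduct_self_le_hypocoercivityMatrix hbs)
    (hypocoercivityMatrix_le_five_dotProduct_self hbs)
    (neg_J_dissipation_le_of_le hr.le hrs hb.le (by nlinarith) hbs2) ht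
  rw [← smul_neg]
  convert hdecay using 3 <;> ring

/-- For `0 < r < R` there are `C, κ > 0` such that for every `s ∈ [r, R]` and `t ≥ 0`,
`‖exp(−t J(s))‖ ≤ C e^{−κ t}` in the (L²) operator norm on 4×4 real matrices. -/
theorem medium_frequency_matrix_exp_decay (r R : ℝ) (hr : 0 < r) (hrR : r < R) :
    ∃ C κ : ℝ, 0 < C ∧ 0 < κ ∧ ∀ s ∈ Set.Icc r R, ∀ t : ℝ, 0 ≤ t →
      ‖NormedSpace.exp (-(t • J s))‖ ≤ C * Real.exp (-κ * t) :=
  medium_frequency_matrix_exp_decay_general r R hr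
end

section
/- There exist constants C > 0 and c > 0 such that for every s with 0 < s < 1/4, every t ≥ 0, and every vector v ∈ ℝ⁴, one has ‖exp(−t · J(s)) v‖² ≤ C e^{−c s² t} ‖v‖², where ‖·‖ is the Euclidean norm on ℝ⁴. -/
/-!
Hypocoercivity: the symmetric part of `J s` is indefinite and vanishes in the `x₀` direction, so
`‖V‖²` itself need not decrease along `V' = -J s V`. The form `q = lyapunovForm s` reweights the
`(x₂, x₃)` block and adds the cross term `-2 s x₀ x₁`, which passes the damping of `x₁` on to
`x₀`; for `0 < s < 1/4` it is comparable to `‖x‖²` and `d/dt q(V) ≤ -(s²/16) q(V)`. Gronwall's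
inequality gives the decay of `q(V)`, hence of `‖V‖²`.
-/

open scoped Matrix
theorem le_exp_mul_of_hasDerivAt_le {f f' : ℝ → ℝ} {k t : ℝ}
    (hf : ∀ r, HasDerivAt f (f' r) r) (hbound : ∀ r, f' r ≤ -k * f r) (ht : 0 ≤ t) :
    f t ≤ Real.exp (-k * t) * f 0 := by
  have := le_gronwallBound_of_liminf_deriv_right_le (δ := f 0) (K := -k) (ε := 0)
    (fun x _ => (hf x).continuousAt.continuousWithinAt)
    (fun x _ r hr => (hf x).hasDerivWithinAt.liminf_right_slope_le hr) le_rfl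
    (fun x _ => by simpa using hbound x) t ⟨ht, le_rfl⟩
  simpa [gronwallBound_ε0, mul_comm] using this

section LyapunovDecay

variable {n : Type*} [Fintype n]

theorem EuclideanSpace.norm_sq_eq_dotProduct (x : EuclideanSpace ℝ n) :
    ‖x‖ ^ 2 = EuclideanSpace.equiv n ℝ x ⬝ᵥ EuclideanSpace.equiv n ℝ x := by
  rw [← real_inner_self_eq_norm_sq, EuclideanSpace.inner_eq_star_dotProduct]
  rfl

theorem HasDerivAt.dotProduct {u v : ℝ → n → ℝ} {u' v' : n → ℝ} {r : ℝ}
    (hu : HasDerivAt u u' r) (hv : HasDerivAt v v' r) :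
    HasDerivAt (fun r => u r ⬝ᵥ v r) (u' ⬝ᵥ v r + u r ⬝ᵥ v') r := by
  have := HasDerivAt.fun_sum (u := Finset.univ) fun i _ =>
    (hasDerivAt_pi.1 hu i).fun_mul (hasDerivAt_pi.1 hv i)
  exact this.congr_deriv Finset.sum_add_distrib

theorem HasDerivAt.const_mulVec (P : Matrix n n ℝ) {u : ℝ → n → ℝ} {u' : n → ℝ} {r : ℝ}
    (hu : HasDerivAt u u' r) : HasDerivAt (fun r => P *ᵥ u r) (P *ᵥ u') r :=
  (Matrix.mulVecLin P).toContinuousLinearMap.hasFDerivAt.comp_hasDerivAt r hu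

variable [DecidableEq n]

attribute [local instance] Matrix.linftyOpNormedAddCommGroup Matrix.linftyOpNormedRing
  Matrix.linftyOpNormedAlgebra in
theorem hasDerivAt_exp_smul_mulVec (B : Matrix n n ℝ) (w : n → ℝ) (r : ℝ) :
    HasDerivAt (fun r : ℝ => NormedSpace.exp (r • B) *ᵥ w)
      (B *ᵥ (NormedSpace.exp (r • B) *ᵥ w)) r := by
  have hL := (LinearMap.toContinuousLinearMap
    (LinearMap.applyₗ w ∘ₗ (Matrix.toLin' : Matrix n n ℝ ≃ₗ[ℝ] _).toLinearMap)).hasFDerivAt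
    (x := NormedSpace.exp (r • B))
  rw [Matrix.mulVec_mulVec]
  exact hL.comp_hasDerivAt r (hasDerivAt_exp_smul_const' B r)

theorem quadForm_exp_smul_mulVec_le (B P : Matrix n n ℝ) {k t : ℝ}
    (hBP : ∀ x, (B *ᵥ x) ⬝ᵥ (P *ᵥ x) + x ⬝ᵥ (P *ᵥ (B *ᵥ x)) ≤ -k * (x ⬝ᵥ (P *ᵥ x)))
    (ht : 0 ≤ t) (w : n → ℝ) :
    (NormedSpace.exp (t • B) *ᵥ w) ⬝ᵥ (P *ᵥ (NormedSpace.exp (t • B) *ᵥ w)) ≤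
      Real.exp (-k * t) * (w ⬝ᵥ (P *ᵥ w)) := by
  have hV := hasDerivAt_exp_smul_mulVec B w
  have := le_exp_mul_of_hasDerivAt_le (fun r => (hV r).dotProduct ((hV r).const_mulVec P))
    (fun r => hBP _) ht
  simpa using this

theorem dotProduct_self_exp_smul_mulVec_le (B P : Matrix n n ℝ) {a b k t : ℝ} (ha : 0 ≤ a)
    (hlow : ∀ x, x ⬝ᵥ x ≤ a * (x ⬝ᵥ (P *ᵥ x))) (hup : ∀ x, x ⬝ᵥ (P *ᵥ x) ≤ b * (x ⬝ᵥ x))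
    (hBP : ∀ x, (B *ᵥ x) ⬝ᵥ (P *ᵥ x) + x ⬝ᵥ (P *ᵥ (B *ᵥ x)) ≤ -k * (x ⬝ᵥ (P *ᵥ x)))
    (ht : 0 ≤ t) (w : n → ℝ) :
    (NormedSpace.exp (t • B) *ᵥ w) ⬝ᵥ (NormedSpace.exp (t • B) *ᵥ w) ≤
      a * b * Real.exp (-k * t) * (w ⬝ᵥ w) :=
  calc _ ≤ a * (Real.exp (-k * t) * (w ⬝ᵥ (P *ᵥ w))) :=
        (hlow _).trans (mul_le_mul_of_nonneg_left (quadForm_exp_smul_mulVec_le B P hBP ht w) ha)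
    _ ≤ a * (Real.exp (-k * t) * (b * (w ⬝ᵥ w))) := by gcongr; exact hup w
    _ = a * b * Real.exp (-k * t) * (w ⬝ᵥ w) := by ring

end LyapunovDecay

/-- The form `x₀² + x₁² + (x₂ + x₃)² + (4x₂ - x₃)² - 2 s x₀ x₁`. -/
def lyapunovForm (s : ℝ) : Matrix (Fin 4) (Fin 4) ℝ :=
  !![1, -s, 0, 0;
     -s, 1, 0, 0;
     0, 0, 17, -3;
     0, 0, -3, 2]

theorem dotProduct_self_le_two_mul_lyapunovForm {s : ℝ} (hs : |s| ≤ 1 / 2) (x : Fin 4 → ℝ) :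
    x ⬝ᵥ x ≤ 2 * (x ⬝ᵥ (lyapunovForm s *ᵥ x)) := by
  obtain ⟨hs₁, hs₂⟩ := abs_le.mp hs
  simp only [dotProduct, Matrix.mulVec, lyapunovForm, Matrix.of_apply, Matrix.cons_val',
    Matrix.cons_val_fin_one, Fin.sum_univ_four, Matrix.cons_val_zero, Matrix.cons_val_one,
    Matrix.cons_val]
  nlinarith [sq_nonneg (x 3 - 2 * x 2), sq_nonneg (x 2),
    mul_nonneg (by linarith : (0 : ℝ) ≤ 1 / 2 - s) (sq_nonneg (x 0 + x 1)),
    mul_nonneg (by linarith : (0 : ℝ) ≤ 1 / 2 + s) (sq_nonneg (x 0 - x 1))]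

theorem lyapunovForm_le {s : ℝ} (hs : |s| ≤ 1) (x : Fin 4 → ℝ) :
    x ⬝ᵥ (lyapunovForm s *ᵥ x) ≤ 18 * (x ⬝ᵥ x) := by
  obtain ⟨hs₁, hs₂⟩ := abs_le.mp hs
  simp only [dotProduct, Matrix.mulVec, lyapunovForm, Matrix.of_apply, Matrix.cons_val',
    Matrix.cons_val_fin_one, Fin.sum_univ_four, Matrix.cons_val_zero, Matrix.cons_val_one,
    Matrix.cons_val]
  nlinarith [sq_nonneg (x 2 + 3 * x 3), sq_nonneg (x 3),
    mul_nonneg (by linarith : (0 : ℝ) ≤ 1 - s) (sq_nonneg (x 0 + x 1)),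
    mul_nonneg (by linarith : (0 : ℝ) ≤ 1 + s) (sq_nonneg (x 0 - x 1))]

theorem lyapunovForm_dissipation {s : ℝ} (hs : 0 < s) (hs' : s < 1 / 4) (x : Fin 4 → ℝ) :
    (-J s *ᵥ x) ⬝ᵥ (lyapunovForm s *ᵥ x) + x ⬝ᵥ (lyapunovForm s *ᵥ (-J s *ᵥ x)) ≤
      -(s ^ 2 / 16) * (x ⬝ᵥ (lyapunovForm s *ᵥ x)) := by
  have hs₀ : 0 ≤ s ^ 2 * (1 / 4 - s) := mul_nonneg (sq_nonneg s) (by linarith)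
  simp only [dotProduct, Matrix.mulVec, J, lyapunovForm, Matrix.neg_apply, Matrix.of_apply,
    Matrix.cons_val', Matrix.cons_val_fin_one, Fin.sum_univ_four, Matrix.cons_val_zero,
    Matrix.cons_val_one, Matrix.cons_val]
  nlinarith [sq_nonneg (x 0 + x 2 + x 3), mul_nonneg hs.le (sq_nonneg (s * (x 0 - x 1))),
    mul_nonneg hs₀ (sq_nonneg (x 0)), mul_nonneg hs₀ (sq_nonneg (x 1)),
    sq_nonneg (s * x 1 + 2 * (4 * x 2 - x 3)), sq_nonneg (s * (x 2 + x 3)),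
    sq_nonneg (4 * x 2 - x 3)]

/-- There exist `C, c > 0` such that for every `0 < s < 1/4`, `t ≥ 0`, and every vector
`v ∈ ℝ⁴` (with the Euclidean norm), `‖exp(−t J(s)) v‖² ≤ C e^{−c s² t} ‖v‖²`. -/
theorem low_frequency_exp_decay :
    ∃ C c : ℝ, 0 < C ∧ 0 < c ∧ ∀ s : ℝ, 0 < s → s < 1 / 4 → ∀ t : ℝ, 0 ≤ t →
      ∀ v : EuclideanSpace ℝ (Fin 4),
        ‖(EuclideanSpace.equiv (Fin 4) ℝ).symm
            (NormedSpace.exp (-(t • J s)) *ᵥ EuclideanSpace.equiv (Fin 4) ℝ v)‖ ^ 2 ≤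
          C * Real.exp (-(c * s ^ 2 * t)) * ‖v‖ ^ 2 := by
  refine ⟨36, 1 / 16, by norm_num, by norm_num, fun s hs hs' t ht v => ?_⟩
  have hs_half : |s| ≤ 1 / 2 := abs_le.mpr ⟨by linarith, by linarith⟩
  have decay := dotProduct_self_exp_smul_mulVec_le (-J s) (lyapunovForm s) zero_le_two
    (dotProduct_self_le_two_mul_lyapunovForm hs_half)
    (lyapunovForm_le (hs_half.trans (by norm_num))) (lyapunovForm_dissipation hs hs') ht
    (EuclideanSpace.equiv (Fin 4) ℝ v)
  rw [EuclideanSpace.norm_sq_eq_dotProduct, EuclideanSpace.norm_sq_eq_dotProduct,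
    ContinuousLinearEquiv.apply_symm_apply, ← smul_neg]
  convert decay using 4 <;> ring
end

section
/- Let 1 ≤ p ≤ 2 and let q be the conjugate exponent (1/p + 1/q = 1), let c > 0, r₀ > 0, and let k ≥ 0 be an integer. Then there exists a constant C > 0 such that for every t ≥ 0 and every measurable function w : ℝ³ → ℂ with ‖w‖_{L^q(ℝ³)} < ∞, one has (∫_{{|ξ| ≤ r₀}} |ξ|^{2k} e^{−c|ξ|² t} |w(ξ)|² dξ)^{1/2} ≤ C (1 + t)^{−(3/2)(1/p − 1/2) − k/2} ‖w‖_{L^q(ℝ³)}. -/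
/-!
Put `φₜ(ξ) = 1_{|ξ| ≤ r₀} |ξ|^k e^{-c|ξ|²t/2}`, so that the left-hand side is `‖φₜ w‖_{L²}`.
Hölder's inequality with `1/r = 1/p - 1/2` bounds it by `‖φₜ‖_{L^r} ‖w‖_{L^q}`. On the ball,
`e^{-c|ξ|²t/2} ≤ e^{c r₀²/2} e^{-c(1+t)|ξ|²/2}`, and absorbing `|ξ|^k` into half of this Gaussian
gives `φₜ(ξ) ≲ (1+t)^{-k/2} G(√(1+t) ξ)` for a fixed Gaussian `G ∈ L^r`. Rescaling by `√(1+t)`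
costs `(1+t)^{-3/(2r)}` in `L^r`, which is the remaining part of the decay rate.
-/

open MeasureTheory Module
open scoped NNReal ENNReal

section Dilation

variable {E F : Type*} [NormedAddCommGroup E] [NormedSpace ℝ E] [FiniteDimensional ℝ E]
  [MeasurableSpace E] [BorelSpace E] [NormedAddCommGroup F] (μ : Measure E) [μ.IsAddHaarMeasure]

theorem eLpNorm_comp_smul {f : E → F} (hf : AEStronglyMeasurable f μ) {s : ℝ} (hs : 0 < s)
    (r : ℝ≥0∞) :
    eLpNorm (fun x => f (s • x)) r μ =
      ENNReal.ofReal (s ^ (-(finrank ℝ E * (1 / r).toReal))) * eLpNorm f r μ := by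
  have hmap := Measure.map_addHaar_smul μ hs.ne'
  rw [abs_of_pos (by positivity)] at hmap
  rw [Real.rpow_neg hs.le, Real.rpow_mul hs.le, Real.rpow_natCast, ← Real.inv_rpow (by positivity),
    ← ENNReal.ofReal_rpow_of_nonneg (by positivity) ENNReal.toReal_nonneg, ← smul_eq_mul,
    ← eLpNorm_smul_measure_of_ne_zero (by simp; positivity), ← hmap,
    eLpNorm_map_measure (by rw [hmap]; exact hf.smul_measure _) (by fun_prop)]
  rfl

end Dilation

section Gaussian

variable {V : Type*} [NormedAddCommGroup V] [InnerProductSpace ℝ V] [FiniteDimensional ℝ V]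
  [MeasurableSpace V] [BorelSpace V]

theorem integrable_exp_neg_mul_sq_norm {a : ℝ} (ha : 0 < a) :
    Integrable (fun v : V => Real.exp (-a * ‖v‖ ^ 2)) :=
  Integrable.of_integral_ne_zero <| by
    rw [GaussianFourier.integral_rexp_neg_mul_sq_norm ha]; positivity

theorem memLp_exp_neg_mul_sq_norm {a : ℝ} (ha : 0 < a) (r : ℝ≥0∞) :
    MemLp (fun v : V => Real.exp (-a * ‖v‖ ^ 2)) r := by
  have hmeas : AEStronglyMeasurable (fun v : V => Real.exp (-a * ‖v‖ ^ 2)) volume := by fun_prop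
  rcases eq_or_ne r 0 with rfl | hr0
  · exact memLp_zero_iff_aestronglyMeasurable.2 hmeas
  rcases eq_or_ne r ⊤ with rfl | hrT
  · refine memLp_top_of_bound hmeas 1 (Filter.Eventually.of_forall fun v => ?_)
    rw [Real.norm_of_nonneg (Real.exp_nonneg _), Real.exp_le_one_iff]
    nlinarith [sq_nonneg ‖v‖]
  rw [← integrable_norm_rpow_iff hmeas hr0 hrT]
  have hpow : (fun v : V => ‖Real.exp (-a * ‖v‖ ^ 2)‖ ^ r.toReal) =
      fun v => Real.exp (-(a * r.toReal) * ‖v‖ ^ 2) := by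
    funext v
    rw [Real.norm_of_nonneg (Real.exp_nonneg _), ← Real.exp_mul]
    ring_nf
  rw [hpow]
  exact integrable_exp_neg_mul_sq_norm (mul_pos ha (ENNReal.toReal_pos hr0 hrT))

end Gaussian

theorem pow_mul_exp_neg_mul_sq_le (k : ℕ) {a v : ℝ} (ha : 0 < a) (hv : 0 ≤ v) :
    v ^ k * Real.exp (-a * v ^ 2) ≤ Real.exp (k ^ 2 / (4 * a)) := by
  have hpow : v ^ k ≤ Real.exp (k * v) := by
    rw [Real.exp_nat_mul]
    exact pow_le_pow_left₀ hv ((le_add_of_nonneg_right zero_le_one).trans (Real.add_one_le_exp v)) k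
  calc v ^ k * Real.exp (-a * v ^ 2) ≤ Real.exp (k * v) * Real.exp (-a * v ^ 2) := by gcongr
    _ = Real.exp (k * v - a * v ^ 2) := by rw [← Real.exp_add]; ring_nf
    _ ≤ Real.exp (k ^ 2 / (4 * a)) := by
        gcongr
        rw [le_div_iff₀ (by positivity)]
        nlinarith [sq_nonneg (2 * a * v - k)]

theorem holderTriple_inv_sub_inv_two {p q : ℝ≥0∞} (hp : p ≤ 2) (hpq : p⁻¹ + q⁻¹ = 1) :
    ENNReal.HolderTriple (p⁻¹ - 2⁻¹)⁻¹ q 2 := by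
  constructor
  rw [inv_inv, ENNReal.sub_add_eq_add_sub (ENNReal.inv_le_inv.2 hp) (by simp), hpq,
    ENNReal.one_sub_inv_two]

noncomputable def lowFreqHeatSymbol {V : Type*} [Norm V] (k : ℕ) (c r₀ t : ℝ) : V → ℝ :=
  {ξ | ‖ξ‖ ≤ r₀}.indicator fun ξ => ‖ξ‖ ^ k * Real.exp (-(c * ‖ξ‖ ^ 2 * t) / 2)

section Symbol

variable {V : Type*} [NormedAddCommGroup V]

theorem norm_lowFreqHeatSymbol_le [NormedSpace ℝ V] (k : ℕ) {c : ℝ} (hc : 0 < c) (r₀ : ℝ) {t : ℝ}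
    (ht : 0 ≤ t) (ξ : V) :
    ‖lowFreqHeatSymbol k c r₀ t ξ‖ ≤ Real.exp (c * r₀ ^ 2 / 2 + k ^ 2 / c) *
      (1 + t) ^ (-(k / 2 : ℝ)) * Real.exp (-(c / 4) * ‖√(1 + t) • ξ‖ ^ 2) := by
  have hs : 0 < 1 + t := by linarith
  by_cases hξ : ‖ξ‖ ≤ r₀
  swap
  · rw [lowFreqHeatSymbol, Set.indicator_of_notMem (by exact hξ), norm_zero]
    positivity
  set v := √(1 + t) * ‖ξ‖
  have hv : ‖√(1 + t) • ξ‖ = v := by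
    rw [norm_smul, Real.norm_of_nonneg (Real.sqrt_nonneg _)]
  have hv_sq : v ^ 2 = (1 + t) * ‖ξ‖ ^ 2 := by rw [mul_pow, Real.sq_sqrt hs.le]
  have hnorm_pow : ‖ξ‖ ^ k = (1 + t) ^ (-(k / 2 : ℝ)) * v ^ k := by
    rw [mul_pow, ← Real.rpow_natCast √(1 + t), Real.sqrt_eq_rpow, ← Real.rpow_mul hs.le,
      ← mul_assoc, ← Real.rpow_add hs, show -(k / 2 : ℝ) + 1 / 2 * k = 0 by ring]
    simp
  have hsplit : ‖ξ‖ ^ k * Real.exp (-(c * ‖ξ‖ ^ 2 * t) / 2) = Real.exp (c * ‖ξ‖ ^ 2 / 2) *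
      ((1 + t) ^ (-(k / 2 : ℝ)) * (v ^ k * Real.exp (-(c / 4) * v ^ 2)) *
        Real.exp (-(c / 4) * v ^ 2)) := by
    have hexp : Real.exp (-(c * ‖ξ‖ ^ 2 * t) / 2) = Real.exp (c * ‖ξ‖ ^ 2 / 2) *
        Real.exp (-(c / 4) * v ^ 2) * Real.exp (-(c / 4) * v ^ 2) := by
      rw [← Real.exp_add, ← Real.exp_add, hv_sq]
      ring_nf
    rw [hnorm_pow, hexp]
    ring
  have hball : Real.exp (c * ‖ξ‖ ^ 2 / 2) ≤ Real.exp (c * r₀ ^ 2 / 2) := by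
    gcongr
  have hmoment := pow_mul_exp_neg_mul_sq_le k (a := c / 4) (by positivity) (by positivity : 0 ≤ v)
  rw [show 4 * (c / 4) = c by ring] at hmoment
  rw [lowFreqHeatSymbol, Set.indicator_of_mem (by exact hξ), Real.norm_of_nonneg (by positivity),
    hsplit, hv, Real.exp_add]
  calc _ ≤ Real.exp (c * r₀ ^ 2 / 2) * ((1 + t) ^ (-(k / 2 : ℝ)) * Real.exp (k ^ 2 / c) *
        Real.exp (-(c / 4) * v ^ 2)) := by gcongr
    _ = _ := by ring

theorem eLpNorm_lowFreqHeatSymbol_le [InnerProductSpace ℝ V] [FiniteDimensional ℝ V]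
    [MeasurableSpace V] [BorelSpace V] (k : ℕ) {c : ℝ} (hc : 0 < c) (r₀ : ℝ) (r : ℝ≥0∞) :
    ∃ C : ℝ, 0 < C ∧ ∀ t : ℝ, 0 ≤ t → eLpNorm (lowFreqHeatSymbol k c r₀ t : V → ℝ) r volume ≤
      ENNReal.ofReal (C * (1 + t) ^ (-(k / 2 : ℝ) - finrank ℝ V / 2 * (1 / r).toReal)) := by
  set A := Real.exp (c * r₀ ^ 2 / 2 + k ^ 2 / c)
  set G : V → ℝ := fun v => Real.exp (-(c / 4) * ‖v‖ ^ 2)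
  have hG := memLp_exp_neg_mul_sq_norm (V := V) (a := c / 4) (by positivity) r
  set N := eLpNorm G r volume
  refine ⟨A * (N.toReal + 1), by positivity, fun t ht => ?_⟩
  have hs : 0 < 1 + t := by linarith
  have hdilate : ENNReal.ofReal (√(1 + t) ^ (-(finrank ℝ V * (1 / r).toReal))) =
      ENNReal.ofReal ((1 + t) ^ (-(finrank ℝ V / 2 * (1 / r).toReal))) := by
    rw [Real.sqrt_eq_rpow, ← Real.rpow_mul hs.le]
    ring_nf
  have hN : N ≤ ENNReal.ofReal (N.toReal + 1) :=
    (ENNReal.le_ofReal_iff_toReal_le hG.eLpNorm_ne_top (by positivity)).2 (by linarith)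
  calc eLpNorm (lowFreqHeatSymbol k c r₀ t) r volume
      ≤ eLpNorm ((A * (1 + t) ^ (-(k / 2 : ℝ))) • fun ξ => G (√(1 + t) • ξ)) r volume :=
        eLpNorm_mono_real fun ξ => norm_lowFreqHeatSymbol_le k hc r₀ ht ξ
    _ = ENNReal.ofReal (A * (1 + t) ^ (-(k / 2 : ℝ))) *
        (ENNReal.ofReal ((1 + t) ^ (-(finrank ℝ V / 2 * (1 / r).toReal))) * N) := by
        rw [eLpNorm_const_smul, Real.enorm_of_nonneg (by positivity),
          eLpNorm_comp_smul volume hG.aestronglyMeasurable (by positivity), hdilate]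
    _ ≤ ENNReal.ofReal (A * (1 + t) ^ (-(k / 2 : ℝ))) *
        (ENNReal.ofReal ((1 + t) ^ (-(finrank ℝ V / 2 * (1 / r).toReal))) *
          ENNReal.ofReal (N.toReal + 1)) := by gcongr
    _ = _ := by
        rw [← ENNReal.ofReal_mul (by positivity), ← ENNReal.ofReal_mul (by positivity),
          sub_eq_add_neg, Real.rpow_add hs]
        ring_nf

theorem eLpNorm_lowFreqHeatSymbol_smul_two_eq {F : Type*} [NormedAddCommGroup F] [NormedSpace ℝ F]
    [MeasurableSpace V] [OpensMeasurableSpace V] (μ : Measure V) (k : ℕ) (c r₀ t : ℝ)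
    (w : V → F) :
    eLpNorm ((lowFreqHeatSymbol k c r₀ t : V → ℝ) • w) 2 μ =
      (∫⁻ ξ in {ξ : V | ‖ξ‖ ≤ r₀}, (‖ξ‖₊ : ℝ≥0∞) ^ (2 * k) *
        ENNReal.ofReal (Real.exp (-(c * ‖ξ‖ ^ 2 * t))) * (‖w ξ‖₊ : ℝ≥0∞) ^ 2 ∂μ) ^ (1 / 2 : ℝ) := by
  rw [eLpNorm_eq_lintegral_rpow_enorm_toReal two_ne_zero ENNReal.ofNat_ne_top,
    ← lintegral_indicator (measurableSet_le continuous_norm.measurable measurable_const)]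
  simp only [ENNReal.toReal_ofNat, ENNReal.rpow_two]
  congr 2 with ξ
  by_cases hξ : ‖ξ‖ ≤ r₀
  swap
  · simp [lowFreqHeatSymbol, hξ]
  have hsq : (‖ξ‖ ^ k * Real.exp (-(c * ‖ξ‖ ^ 2 * t) / 2)) ^ 2 =
      ‖ξ‖ ^ (2 * k) * Real.exp (-(c * ‖ξ‖ ^ 2 * t)) := by
    rw [mul_pow, ← pow_mul', ← Real.exp_nat_mul]
    ring_nf
  have hmem : ξ ∈ {ξ : V | ‖ξ‖ ≤ r₀} := hξ
  have hnonneg : 0 ≤ ‖ξ‖ ^ k * Real.exp (-(c * ‖ξ‖ ^ 2 * t) / 2) := by positivity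
  rw [Pi.smul_apply', lowFreqHeatSymbol, Set.indicator_of_mem hmem, Set.indicator_of_mem hmem,
    enorm_smul, Real.enorm_of_nonneg hnonneg, mul_pow, ← ENNReal.ofReal_pow hnonneg, hsq,
    ENNReal.ofReal_mul (by positivity), ENNReal.ofReal_pow (norm_nonneg ξ), ofReal_norm,
    enorm_eq_nnnorm, enorm_eq_nnnorm]

end Symbol

theorem low_frequency_heat_decay_general (p q : ℝ≥0∞) (hp2 : p ≤ 2)
    (hpq : 1 / p + 1 / q = 1) (c r₀ : ℝ) (hc : 0 < c) (k : ℕ) :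
    ∃ C : ℝ, 0 < C ∧ ∀ t : ℝ, 0 ≤ t → ∀ w : EuclideanSpace ℝ (Fin 3) → ℂ,
      Measurable w → eLpNorm w q volume < ⊤ →
      (∫⁻ ξ in {ξ : EuclideanSpace ℝ (Fin 3) | ‖ξ‖ ≤ r₀},
          (‖ξ‖₊ : ℝ≥0∞) ^ (2 * k) * ENNReal.ofReal (Real.exp (-(c * ‖ξ‖ ^ 2 * t))) *
            (‖w ξ‖₊ : ℝ≥0∞) ^ 2) ^ (1 / 2 : ℝ) ≤
        ENNReal.ofReal
            (C * (1 + t) ^ (-(3 / 2 : ℝ) * (1 / p.toReal - 1 / 2) - (k : ℝ) / 2)) *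
          eLpNorm w q volume := by
  rw [one_div, one_div] at hpq
  have hp0 : p ≠ 0 := by
    rintro rfl
    simp at hpq
  have := holderTriple_inv_sub_inv_two hp2 hpq
  have hexponent : -(k / 2 : ℝ) - finrank ℝ (EuclideanSpace ℝ (Fin 3)) / 2 *
      (1 / (p⁻¹ - 2⁻¹)⁻¹).toReal = -(3 / 2 : ℝ) * (1 / p.toReal - 1 / 2) - (k : ℝ) / 2 := by
    rw [finrank_euclideanSpace_fin, one_div, inv_inv,
      ENNReal.toReal_sub_of_le (ENNReal.inv_le_inv.2 hp2) (ENNReal.inv_ne_top.2 hp0),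
      ENNReal.toReal_inv, ENNReal.toReal_inv, ENNReal.toReal_ofNat]
    push_cast
    ring
  obtain ⟨C, hC, hdecay⟩ :=
    eLpNorm_lowFreqHeatSymbol_le (V := EuclideanSpace ℝ (Fin 3)) k hc r₀ (p⁻¹ - 2⁻¹)⁻¹
  refine ⟨C, hC, fun t ht w hw _ => ?_⟩
  have hsymbol : Measurable (lowFreqHeatSymbol k c r₀ t : EuclideanSpace ℝ (Fin 3) → ℝ) :=
    (by fun_prop : Measurable _).indicator (measurableSet_le (by fun_prop) (by fun_prop))
  rw [← eLpNorm_lowFreqHeatSymbol_smul_two_eq, ← hexponent]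
  calc _ ≤ eLpNorm (lowFreqHeatSymbol k c r₀ t) (p⁻¹ - 2⁻¹)⁻¹ volume * eLpNorm w q volume :=
        eLpNorm_smul_le_mul_eLpNorm hw.aestronglyMeasurable hsymbol.aestronglyMeasurable
    _ ≤ _ := by gcongr; exact hdecay t ht

/-- For `1 ≤ p ≤ 2` with conjugate exponent `q`, `c > 0`, `r₀ > 0`, and `k ≥ 0`, there is
`C > 0` such that for every `t ≥ 0` and every measurable `w : ℝ³ → ℂ` with finite `L^q` norm,
`(∫_{|ξ|≤r₀} |ξ|^{2k} e^{−c|ξ|²t} |w(ξ)|² dξ)^{1/2}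
  ≤ C (1+t)^{−(3/2)(1/p−1/2)−k/2} ‖w‖_{L^q}`. -/
theorem low_frequency_heat_decay (p q : ℝ≥0∞) (hp1 : 1 ≤ p) (hp2 : p ≤ 2)
    (hpq : 1 / p + 1 / q = 1) (c r₀ : ℝ) (hc : 0 < c) (hr₀ : 0 < r₀) (k : ℕ) :
    ∃ C : ℝ, 0 < C ∧ ∀ t : ℝ, 0 ≤ t → ∀ w : EuclideanSpace ℝ (Fin 3) → ℂ,
      Measurable w → eLpNorm w q volume < ⊤ →
      (∫⁻ ξ in {ξ : EuclideanSpace ℝ (Fin 3) | ‖ξ‖ ≤ r₀},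
          (‖ξ‖₊ : ℝ≥0∞) ^ (2 * k) * ENNReal.ofReal (Real.exp (-(c * ‖ξ‖ ^ 2 * t))) *
            (‖w ξ‖₊ : ℝ≥0∞) ^ 2) ^ (1 / 2 : ℝ) ≤
        ENNReal.ofReal
            (C * (1 + t) ^ (-(3 / 2 : ℝ) * (1 / p.toReal - 1 / 2) - (k : ℝ) / 2)) *
          eLpNorm w q volume :=
  low_frequency_heat_decay_general p q hp2 hpq c r₀ hc k
end
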